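/- arXiv:1902.00535 — 2 statements merged into one kernel-verified Lean document; each statement's English description precedes it below -/
import Mathlib

section
/- Let X ∈ ℝ^{n×p}, A ⊆ {1,…,p} with |A| = k such that the columns X_j, j ∈ A, are linearly independent, and let k < s ≤ p. Let V ∈ ℝ^{n×(n−k)} have orthonormal columns with V Vᵀ = P_A^⊥, the orthogonal projection onto the orthogonal complement of span(X_j : j ∈ A). Then the (n−k)×(p−k) matrix Vᵀ X_{A^c} satisfies κ(s−k, 3; Vᵀ X_{A^c}) ≥ √(n/(n−k)) · κ(s, 3; X), where in the definition of κ for Vᵀ X_{A^c} the normalization √(n−k) (the number of rows) is used in place of √n. In particular, if X satisfies RE(s, 3), then Vᵀ X_{A^c} satisfies RE(s−k, 3). -/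
open MeasureTheory ProbabilityTheory Filter Matrix
open scoped ENNReal NNReal BigOperators Classical

noncomputable section

/-- Product of independent real Gaussians: the law `N_n(μ, vI_n)` on `ℝ^n`. -/
def gaussianPi (n : ℕ) (μ : Fin n → ℝ) (v : NNReal) : Measure (Fin n → ℝ) :=
  Measure.pi fun i => gaussianReal (μ i) v

/-- Squared Euclidean norm on `ℝ^n`. -/
def sqnorm {n : ℕ} (x : Fin n → ℝ) : ℝ := ∑ i, (x i) ^ 2

/-- Euclidean inner product. -/
def inn {n : ℕ} (x y : Fin n → ℝ) : ℝ := ∑ i, x i * y i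

/-- Chi-squared distribution with `k` degrees of freedom, realized as the law of the
squared Euclidean norm of a standard Gaussian vector in `ℝ^k`. -/
def chiSq (k : ℕ) : Measure ℝ := (gaussianPi k 0 1).map sqnorm

/-- `(1-γ)`-quantile of the chi-squared distribution with `k` degrees of freedom. -/
def chiSqQuantile (k : ℕ) (γ : ℝ) : ℝ :=
  sInf {t : ℝ | ENNReal.ofReal (1 - γ) ≤ chiSq k (Set.Iic t)}

/-- Span of the columns of `X` indexed by `A`. -/
def colSpan {n p : ℕ} (X : Matrix (Fin n) (Fin p) ℝ) (A : Finset (Fin p)) :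
    Submodule ℝ (Fin n → ℝ) :=
  Submodule.span ℝ ((fun j => fun i => X i j) '' (A : Set (Fin p)))

/-- `rank(X_A)`, the dimension of the span of the columns of `X` indexed by `A`. -/
def rankA {n p : ℕ} (X : Matrix (Fin n) (Fin p) ℝ) (A : Finset (Fin p)) : ℕ :=
  Module.finrank ℝ (colSpan X A)

/-- The orthogonal projection of `v` onto the submodule `S` of `ℝ^n`: the unique
`w ∈ S` with `v - w ⊥ S`. -/
def orthProj {n : ℕ} (S : Submodule ℝ (Fin n → ℝ)) (v : Fin n → ℝ) : Fin n → ℝ :=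
  Classical.epsilon fun w => w ∈ S ∧ ∀ u ∈ S, inn (v - w) u = 0

/-- `P_A v`: orthogonal projection onto the span of the columns of `X` in `A`. -/
def projA {n p : ℕ} (X : Matrix (Fin n) (Fin p) ℝ) (A : Finset (Fin p)) (v : Fin n → ℝ) :
    Fin n → ℝ := orthProj (colSpan X A) v

/-- `P_A^⊥ v = v - P_A v`. -/
def projPerp {n p : ℕ} (X : Matrix (Fin n) (Fin p) ℝ) (A : Finset (Fin p)) (v : Fin n → ℝ) :
    Fin n → ℝ := v - projA X A v

/-- The SURE factor `L̂ = 1 - (n-k)σ²/‖y_⊥‖²`. -/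
def steinL {n p : ℕ} (X : Matrix (Fin n) (Fin p) ℝ) (A : Finset (Fin p)) (σ : ℝ)
    (y : Fin n → ℝ) : ℝ :=
  1 - ((n - rankA X A : ℕ) : ℝ) * σ ^ 2 / sqnorm (projPerp X A y)

/-- The Stein estimate `μ̂_⊥ = (1-B) y_⊥` of the weak-signal part. -/
def muHatPerp {n p : ℕ} (X : Matrix (Fin n) (Fin p) ℝ) (A : Finset (Fin p)) (σ : ℝ)
    (y : Fin n → ℝ) : Fin n → ℝ :=
  steinL X A σ y • projPerp X A y

/-- Squared radius for strong signals: `r_A² = c₁σ²χ²_{k,α/2}/n`. -/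
def rA2sq {n p : ℕ} (X : Matrix (Fin n) (Fin p) ℝ) (A : Finset (Fin p)) (σ c1 α : ℝ) : ℝ :=
  c1 * σ ^ 2 * chiSqQuantile (rankA X A) (α / 2) / n

/-- Squared radius for weak signals: `r_⊥² = c₂((n-k)/n)σ²(L̂ + c_s(n-k)^{-1/2})`. -/
def rPerp2sq {n p : ℕ} (X : Matrix (Fin n) (Fin p) ℝ) (A : Finset (Fin p)) (σ c2 cs : ℝ)
    (y : Fin n → ℝ) : ℝ :=
  c2 * (((n - rankA X A : ℕ) : ℝ) / n) * σ ^ 2 *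
    (steinL X A σ y + cs / Real.sqrt ((n - rankA X A : ℕ) : ℝ))

/-- Membership of `μ` in the two-step Stein confidence set built from data `y`. -/
def inChat {n p : ℕ} (X : Matrix (Fin n) (Fin p) ℝ) (A : Finset (Fin p))
    (σ c1 c2 cs α : ℝ) (y μ : Fin n → ℝ) : Prop :=
  sqnorm (projA X A μ - projA X A y) / (n * rA2sq X A σ c1 α)
    + sqnorm (projPerp X A μ - muHatPerp X A σ y) / (n * rPerp2sq X A σ c2 cs y) ≤ 1

/-- Normalized diameter `|Ĉ| = 2 max(r_A, r_⊥)` of the two-step Stein confidence set. -/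
def diamChat {n p : ℕ} (X : Matrix (Fin n) (Fin p) ℝ) (A : Finset (Fin p))
    (σ c1 c2 cs α : ℝ) (y : Fin n → ℝ) : ℝ :=
  2 * max (Real.sqrt (rA2sq X A σ c1 α)) (Real.sqrt (rPerp2sq X A σ c2 cs y))

/-- Restricted-eigenvalue constant `κ(s, c₀; M)` for a matrix `M` with `m` rows and
columns indexed by an arbitrary finite type (the normalization `√m` uses the number of
rows). -/
def kappaI {m : ℕ} {ι : Type} [Fintype ι] [DecidableEq ι]
    (M : Matrix (Fin m) ι ℝ) (s : ℕ) (c0 : ℝ) : ℝ :=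
  sInf {r : ℝ | ∃ S : Finset ι, S.card ≤ s ∧ ∃ δ : ι → ℝ,
    (∑ j ∈ Sᶜ, |δ j| ≤ c0 * ∑ j ∈ S, |δ j|) ∧ δ ≠ 0 ∧
    r = Real.sqrt (sqnorm (M.mulVec δ))
        / (Real.sqrt (m : ℝ) * Real.sqrt (∑ j ∈ S, (δ j) ^ 2))}

/-- The submatrix of the columns of `X` outside `A`. -/
def colsOutside {n p : ℕ} (X : Matrix (Fin n) (Fin p) ℝ) (A : Finset (Fin p)) :
    Matrix (Fin n) {j : Fin p // j ∉ A} ℝ :=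
  fun i j => X i j.val

-- helpers to insert above the theorem (using proof.lean's defs)
lemma sqnorm_eq_dot {n : ℕ} (x : Fin n → ℝ) : sqnorm x = x ⬝ᵥ x := by
  simp [sqnorm, dotProduct, sq]

lemma sqnorm_mulVec {m : ℕ} {ι : Type} [Fintype ι] (M : Matrix (Fin m) ι ℝ) (u : ι → ℝ) :
    sqnorm (M.mulVec u) = u ⬝ᵥ ((Mᵀ * M).mulVec u) := by
  rw [sqnorm_eq_dot, Matrix.dotProduct_mulVec, ← Matrix.mulVec_transpose,
    ← Matrix.mulVec_mulVec, dotProduct_comm, Matrix.dotProduct_mulVec,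
    ← Matrix.mulVec_transpose]

lemma exists_orthProj {n : ℕ} (S : Submodule ℝ (Fin n → ℝ)) (v : Fin n → ℝ) :
    ∃ w, w ∈ S ∧ ∀ u ∈ S, inn (v - w) u = 0 := by
  let S' : Submodule ℝ (EuclideanSpace ℝ (Fin n)) := S.comap (WithLp.linearEquiv 2 ℝ (Fin n → ℝ)).toLinearMap
  let v' : EuclideanSpace ℝ (Fin n) := WithLp.toLp 2 v
  have hmem : S'.starProjection v' ∈ S' := by
    rw [Submodule.starProjection_apply]; exact (S'.orthogonalProjectionOnto v').2
  refine ⟨(S'.starProjection v' : EuclideanSpace ℝ (Fin n)).ofLp, hmem, ?_⟩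
  intro u hu
  have h := Submodule.sub_starProjection_mem_orthogonal (K := S') v'
  have hu' : WithLp.toLp 2 u ∈ S' := by simpa [S'] using hu
  have h2 := (Submodule.mem_orthogonal _ _).1 h _ hu'
  have h3 : ∑ x, (v x - (S'.starProjection v' : EuclideanSpace ℝ (Fin n)) x) * u x = 0 := by
    simpa [v', PiLp.inner_apply, RCLike.inner_apply, mul_comm] using h2
  simpa [inn] using h3

lemma orthProj_mem {n : ℕ} (S : Submodule ℝ (Fin n → ℝ)) (v : Fin n → ℝ) :
    orthProj S v ∈ S :=
  (Classical.epsilon_spec (exists_orthProj S v)).1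

lemma exists_theta {n p : ℕ} (X : Matrix (Fin n) (Fin p) ℝ) (A : Finset (Fin p))
    {w : Fin n → ℝ} (hw : w ∈ colSpan X A) :
    ∃ θ : Fin p → ℝ, (∀ j ∉ A, θ j = 0) ∧ X.mulVec θ = w := by
  let W : Submodule ℝ (Fin p → ℝ) :=
    { carrier := {θ | ∀ j ∉ A, θ j = 0}
      add_mem' := fun ha hb j hj => by simp [ha j hj, hb j hj]
      zero_mem' := fun j hj => rfl
      smul_mem' := fun c θ hθ j hj => by simp [hθ j hj] }
  have hle : colSpan X A ≤ W.map X.mulVecLin := by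
    apply Submodule.span_le.2
    rintro _ ⟨j, hj, rfl⟩
    refine ⟨Pi.single j 1, fun j' hj' => Pi.single_eq_of_ne (by rintro rfl; exact hj' hj) 1, ?_⟩
    ext i
    simp [Matrix.mulVecLin, Matrix.mulVec_single]
  obtain ⟨θ, hθ, hXθ⟩ := hle hw
  exact ⟨θ, hθ, hXθ⟩

lemma re_key {n p k : ℕ} (X : Matrix (Fin n) (Fin p) ℝ) (A : Finset (Fin p))
    (V : Matrix (Fin n) (Fin (n - k)) ℝ)
    (hortho : Vᵀ * V = 1)
    (hproj : ∀ v, (V * Vᵀ).mulVec v = v - orthProj (colSpan X A) v)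
    (S' : Finset {j : Fin p // j ∉ A}) (δ : {j : Fin p // j ∉ A} → ℝ)
    (hcone : ∑ j ∈ S'ᶜ, |δ j| ≤ 3 * ∑ j ∈ S', |δ j|) (hδ : δ ≠ 0) :
    ∃ (S : Finset (Fin p)) (δt : Fin p → ℝ),
      S.card ≤ A.card + S'.card ∧
      (∑ j ∈ Sᶜ, |δt j| ≤ 3 * ∑ j ∈ S, |δt j|) ∧ δt ≠ 0 ∧
      sqnorm (X.mulVec δt) = sqnorm ((Vᵀ * colsOutside X A).mulVec δ) ∧
      ∑ j ∈ S', (δ j)^2 ≤ ∑ j ∈ S, (δt j)^2 := by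
  classical
  set u : Fin n → ℝ := (colsOutside X A).mulVec δ with hu
  obtain ⟨θ, hθ0, hXθ⟩ := exists_theta X A (orthProj_mem (colSpan X A) u)
  set δext : Fin p → ℝ := fun j => if h : j ∈ A then 0 else δ ⟨j, h⟩ with hδext
  set δt : Fin p → ℝ := δext - θ with hδt
  have hδtout : ∀ (j' : {j : Fin p // j ∉ A}), δt j'.val = δ j' := by
    intro j'
    simp [hδt, hδext, j'.2, hθ0 j'.val j'.2]
  have hXδext : X.mulVec δext = u := by
    ext i
    rw [hu]
    simp only [Matrix.mulVec, dotProduct, colsOutside, hδext]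
    rw [← Finset.sum_subset (Finset.subset_univ Aᶜ)]
    · rw [Finset.sum_subtype (p := fun j => j ∉ A) Aᶜ (fun j => Finset.mem_compl) (fun j => X i j * δext j)]
      apply Finset.sum_congr rfl
      intro j' _
      simp [hδext, j'.2]
    · intro j _ hj
      simp only [Finset.mem_compl, not_not] at hj
      simp [hδext, hj]
  have hXδt : X.mulVec δt = (V * Vᵀ).mulVec u := by
    rw [hproj u, ← hXθ, ← hXδext, hδt, Matrix.mulVec_sub]
  have hP : (V * Vᵀ)ᵀ * (V * Vᵀ) = V * Vᵀ := by
    rw [Matrix.transpose_mul, Matrix.transpose_transpose,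
      Matrix.mul_assoc V Vᵀ (V * Vᵀ), ← Matrix.mul_assoc Vᵀ V Vᵀ, hortho, Matrix.one_mul]
  have hRHS : (Vᵀ * colsOutside X A).mulVec δ = Vᵀ.mulVec u := by
    rw [← Matrix.mulVec_mulVec, ← hu]
  have hsq : sqnorm (X.mulVec δt) = sqnorm ((Vᵀ * colsOutside X A).mulVec δ) := by
    rw [hXδt, sqnorm_mulVec, hP, hRHS, sqnorm_mulVec Vᵀ u, Matrix.transpose_transpose]
  set emb : {j : Fin p // j ∉ A} ↪ Fin p := ⟨Subtype.val, Subtype.val_injective⟩ with hemb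
  refine ⟨A ∪ S'.map emb, δt, ?_, ?_, ?_, hsq, ?_⟩
  · exact (Finset.card_union_le _ _).trans (by rw [Finset.card_map])
  · have hScomp : (A ∪ S'.map emb)ᶜ = S'ᶜ.map emb := by
      ext j
      simp only [Finset.mem_compl, Finset.mem_union, Finset.mem_map, not_or,
        Function.Embedding.coeFn_mk, hemb]
      constructor
      · rintro ⟨hjA, hjm⟩
        exact ⟨⟨j, hjA⟩, fun hS => hjm ⟨⟨j, hjA⟩, hS, rfl⟩, rfl⟩
      · rintro ⟨⟨j', hj'⟩, hS, rfl⟩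
        refine ⟨hj', ?_⟩
        rintro ⟨a, ha, hav⟩
        exact hS (by rwa [Subtype.ext hav] at ha)
    have h1 : ∑ j ∈ (A ∪ S'.map emb)ᶜ, |δt j| = ∑ j ∈ S'ᶜ, |δ j| := by
      rw [hScomp, Finset.sum_map]
      exact Finset.sum_congr rfl fun j' _ => by rw [hemb]; simp [hδtout j']
    have h2 : ∑ j ∈ S'.map emb, |δt j| = ∑ j ∈ S', |δ j| := by
      rw [Finset.sum_map]
      exact Finset.sum_congr rfl fun j' _ => by rw [hemb]; simp [hδtout j']
    calc ∑ j ∈ (A ∪ S'.map emb)ᶜ, |δt j| = ∑ j ∈ S'ᶜ, |δ j| := h1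
      _ ≤ 3 * ∑ j ∈ S', |δ j| := hcone
      _ = 3 * ∑ j ∈ S'.map emb, |δt j| := by rw [h2]
      _ ≤ 3 * ∑ j ∈ A ∪ S'.map emb, |δt j| := by
          apply mul_le_mul_of_nonneg_left _ (by norm_num)
          exact Finset.sum_le_sum_of_subset_of_nonneg Finset.subset_union_right
            (fun j _ _ => abs_nonneg _)
  · obtain ⟨j', hj'⟩ := Function.ne_iff.1 hδ
    intro h0
    exact hj' (by rw [← hδtout j', h0]; rfl)
  · have h3 : ∑ j ∈ S'.map emb, (δt j)^2 = ∑ j ∈ S', (δ j)^2 := by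
      rw [Finset.sum_map]
      exact Finset.sum_congr rfl fun j' _ => by rw [hemb]; simp [hδtout j']
    rw [← h3]
    exact Finset.sum_le_sum_of_subset_of_nonneg Finset.subset_union_right
      (fun j _ _ => sq_nonneg _)

lemma kappaI_bddBelow {m : ℕ} {ι : Type} [Fintype ι] [DecidableEq ι]
    (M : Matrix (Fin m) ι ℝ) (s : ℕ) (c0 : ℝ) :
    BddBelow {r : ℝ | ∃ S : Finset ι, S.card ≤ s ∧ ∃ δ : ι → ℝ,
      (∑ j ∈ Sᶜ, |δ j| ≤ c0 * ∑ j ∈ S, |δ j|) ∧ δ ≠ 0 ∧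
      r = Real.sqrt (sqnorm (M.mulVec δ))
          / (Real.sqrt (m : ℝ) * Real.sqrt (∑ j ∈ S, (δ j) ^ 2))} := by
  refine ⟨0, ?_⟩
  rintro r ⟨S, -, δ, -, -, rfl⟩
  positivity

lemma kappaI_le {m : ℕ} {ι : Type} [Fintype ι] [DecidableEq ι]
    (M : Matrix (Fin m) ι ℝ) (s : ℕ) (c0 : ℝ) (S : Finset ι) (hS : S.card ≤ s)
    (δ : ι → ℝ) (hcone : ∑ j ∈ Sᶜ, |δ j| ≤ c0 * ∑ j ∈ S, |δ j|) (hδ : δ ≠ 0) :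
    kappaI M s c0 ≤ Real.sqrt (sqnorm (M.mulVec δ))
        / (Real.sqrt (m : ℝ) * Real.sqrt (∑ j ∈ S, (δ j) ^ 2)) :=
  csInf_le (kappaI_bddBelow M s c0) ⟨S, hS, δ, hcone, hδ, rfl⟩

/-- The restricted eigenvalue condition is inherited by the projected
design (as shown in the proof of Corollary 3 of the paper): if `|A| = k`, the columns
`X_j, j ∈ A` are linearly independent, `k < s ≤ p`, and `V` has orthonormal columns with
`VVᵀ = P_A^⊥`, then `κ(s-k, 3; VᵀX_{Aᶜ}) ≥ √(n/(n-k)) κ(s, 3; X)`; in particular if `X`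
satisfies `RE(s,3)` then `VᵀX_{Aᶜ}` satisfies `RE(s-k, 3)`. -/
theorem re_inherited_by_projection
    {n p k s : ℕ} (X : Matrix (Fin n) (Fin p) ℝ) (A : Finset (Fin p))
    (hcard : A.card = k) (hrank : rankA X A = k)
    (hks : k < s) (hsp : s ≤ p)
    (V : Matrix (Fin n) (Fin (n - k)) ℝ)
    (hortho : Vᵀ * V = 1)
    (hproj : ∀ v : Fin n → ℝ, (V * Vᵀ).mulVec v = v - orthProj (colSpan X A) v) :
    Real.sqrt ((n : ℝ) / ((n - k : ℕ) : ℝ)) * kappaI X s 3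
      ≤ kappaI (Vᵀ * colsOutside X A) (s - k) 3
    ∧ (0 < kappaI X s 3 → 0 < kappaI (Vᵀ * colsOutside X A) (s - k) 3) := by
  classical
  have hkn : k ≤ n := by
    have h1 := Submodule.finrank_le (colSpan X A)
    rw [Module.finrank_fin_fun] at h1
    unfold rankA at hrank
    omega
  -- a column index outside A
  have hj0 : ∃ j0 : Fin p, j0 ∉ A := by
    have hAc : (Aᶜ : Finset (Fin p)).Nonempty := by
      apply Finset.card_pos.1
      rw [Finset.card_compl, hcard, Fintype.card_fin]
      omega
    obtain ⟨j0, hj0⟩ := hAc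
    exact ⟨j0, Finset.mem_compl.1 hj0⟩
  obtain ⟨j0, hj0⟩ := hj0
  set j0' : {j : Fin p // j ∉ A} := ⟨j0, hj0⟩ with hj0'
  have hδ1 : (Pi.single j0' (1:ℝ) : {j : Fin p // j ∉ A} → ℝ) ≠ 0 := by
    intro h0
    have := congrFun h0 j0'
    simp [Pi.single_eq_same] at this
  have hcone1 : ∑ j ∈ ({j0'} : Finset {j : Fin p // j ∉ A})ᶜ, |Pi.single j0' (1:ℝ) j|
      ≤ 3 * ∑ j ∈ ({j0'} : Finset {j : Fin p // j ∉ A}), |Pi.single j0' (1:ℝ) j| := by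
    have hL : ∑ j ∈ ({j0'} : Finset {j : Fin p // j ∉ A})ᶜ, |Pi.single j0' (1:ℝ) j| = 0 := by
      apply Finset.sum_eq_zero
      intro j hj
      have hne : j ≠ j0' := by
        simpa [Finset.mem_compl, Finset.mem_singleton] using hj
      simp [Pi.single_eq_of_ne hne]
    rw [hL]
    simp
  have hcard1 : ({j0'} : Finset {j : Fin p // j ∉ A}).card ≤ s - k := by
    rw [Finset.card_singleton]; omega
  have main : Real.sqrt ((n : ℝ) / ((n - k : ℕ) : ℝ)) * kappaI X s 3
      ≤ kappaI (Vᵀ * colsOutside X A) (s - k) 3 := by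
    apply le_csInf
    · exact ⟨_, {j0'}, hcard1, Pi.single j0' 1, hcone1, hδ1, rfl⟩
    · rintro r' ⟨S', hS'card, δ, hconeδ, hδne, rfl⟩
      obtain ⟨S, δt, hcardS, hconet, hδtne, hsq, hsumsq⟩ :=
        re_key X A V hortho hproj S' δ hconeδ hδne
      have hScard : S.card ≤ s := by
        rw [hcard] at hcardS
        omega
      have hκle := kappaI_le X s 3 S hScard δt hconet hδtne
      -- positivity of the restricted sum
      have hapos : 0 < ∑ j ∈ S', (δ j) ^ 2 := by
        rcases ((Finset.sum_nonneg fun j _ => sq_nonneg (δ j)).lt_or_eq) with h | h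
        · exact h
        · exfalso
          have hz : ∀ j ∈ S', δ j = 0 := by
            intro j hj
            have := (Finset.sum_eq_zero_iff_of_nonneg
              (fun j _ => sq_nonneg (δ j))).1 h.symm j hj
            exact pow_eq_zero_iff two_ne_zero |>.mp this
          have hzS : ∑ j ∈ S', |δ j| = 0 :=
            Finset.sum_eq_zero fun j hj => by rw [hz j hj, abs_zero]
          have hzC : ∑ j ∈ S'ᶜ, |δ j| = 0 := by
            have h1 : ∑ j ∈ S'ᶜ, |δ j| ≤ 0 := by rw [hzS] at hconeδ; linarith
            have h2 : 0 ≤ ∑ j ∈ S'ᶜ, |δ j| :=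
              Finset.sum_nonneg fun j _ => abs_nonneg _
            linarith
          apply hδne
          funext j
          by_cases hjS : j ∈ S'
          · exact hz j hjS
          · have := (Finset.sum_eq_zero_iff_of_nonneg
              (fun j _ => abs_nonneg (δ j))).1 hzC j (Finset.mem_compl.2 hjS)
            exact abs_eq_zero.1 this
      rcases lt_or_eq_of_le hkn with hlt | hEq
      · -- k < n
        have hnkpos : (0:ℝ) < ((n - k : ℕ) : ℝ) := by
          have : 0 < n - k := by omega
          exact_mod_cast this
        have hnpos : (0:ℝ) < (n : ℝ) := by
          have : 0 < n := by omega
          exact_mod_cast this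
        have hsqn : 0 < Real.sqrt (n : ℝ) := Real.sqrt_pos.2 hnpos
        have hsqnk : 0 < Real.sqrt ((n - k : ℕ) : ℝ) := Real.sqrt_pos.2 hnkpos
        have hsqa : 0 < Real.sqrt (∑ j ∈ S', (δ j) ^ 2) := Real.sqrt_pos.2 hapos
        have hsqab : Real.sqrt (∑ j ∈ S', (δ j) ^ 2) ≤ Real.sqrt (∑ j ∈ S, (δt j) ^ 2) :=
          Real.sqrt_le_sqrt hsumsq
        have hsqb : 0 < Real.sqrt (∑ j ∈ S, (δt j) ^ 2) := lt_of_lt_of_le hsqa hsqab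
        have hsplit : Real.sqrt ((n : ℝ) / ((n - k : ℕ) : ℝ))
            = Real.sqrt (n : ℝ) / Real.sqrt ((n - k : ℕ) : ℝ) :=
          Real.sqrt_div hnpos.le _
        set N := Real.sqrt (sqnorm ((Vᵀ * colsOutside X A).mulVec δ)) with hN
        have hNnn : 0 ≤ N := Real.sqrt_nonneg _
        calc Real.sqrt ((n : ℝ) / ((n - k : ℕ) : ℝ)) * kappaI X s 3
            ≤ Real.sqrt ((n : ℝ) / ((n - k : ℕ) : ℝ)) *
              (Real.sqrt (sqnorm (X.mulVec δt))
                / (Real.sqrt (n : ℝ) * Real.sqrt (∑ j ∈ S, (δt j) ^ 2))) :=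
              mul_le_mul_of_nonneg_left hκle (Real.sqrt_nonneg _)
          _ = N / (Real.sqrt ((n - k : ℕ) : ℝ) * Real.sqrt (∑ j ∈ S, (δt j) ^ 2)) := by
              rw [hsq, ← hN, hsplit, div_mul_div_comm, mul_left_comm,
                mul_div_mul_left _ _ (ne_of_gt hsqn)]
          _ ≤ N / (Real.sqrt ((n - k : ℕ) : ℝ) * Real.sqrt (∑ j ∈ S', (δ j) ^ 2)) := by
              apply div_le_div_of_nonneg_left hNnn (by positivity)
              exact mul_le_mul_of_nonneg_left hsqab hsqnk.le
      · -- k = n : both sides vanish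
        have h0 : ((n - k : ℕ) : ℝ) = 0 := by
          have : n - k = 0 := by omega
          rw [this, Nat.cast_zero]
        rw [h0, div_zero, Real.sqrt_zero, zero_mul, zero_mul, div_zero]
  refine ⟨main, fun hκ => ?_⟩
  rcases lt_or_eq_of_le hkn with hlt | hEq
  · have hcpos : 0 < Real.sqrt ((n : ℝ) / ((n - k : ℕ) : ℝ)) := by
      apply Real.sqrt_pos.2
      apply div_pos
      · have : 0 < n := by omega
        exact_mod_cast this
      · have : 0 < n - k := by omega
        exact_mod_cast this
    exact lt_of_lt_of_le (mul_pos hcpos hκ) main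
  · exfalso
    obtain ⟨S, δt, hcardS, hconet, hδtne, hsq, _⟩ :=
      re_key X A V hortho hproj {j0'} (Pi.single j0' 1) hcone1 hδ1
    have hScard : S.card ≤ s := by
      rw [hcard, Finset.card_singleton] at hcardS
      omega
    have hz : sqnorm ((Vᵀ * colsOutside X A).mulVec (Pi.single j0' 1)) = 0 := by
      have huniv : (Finset.univ : Finset (Fin (n - k))) = ∅ := by
        apply Finset.card_eq_zero.1
        rw [Finset.card_univ, Fintype.card_fin]
        omega
      rw [sqnorm, huniv, Finset.sum_empty]
    have hle := kappaI_le X s 3 S hScard δt hconet hδtne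
    rw [hsq, hz, Real.sqrt_zero, zero_div] at hle
    linarith

end
end

section
/- Let n > k ≥ 1 be integers, E > 2, and r̃_A, r̃_⊥ > 0. Over the feasible set {(c₁, c₂) : 1/c₁ + 1/c₂ = 1, 1 < c₁ ≤ E, 1 < c₂ ≤ E}, the function (c₁, c₂) ↦ k log(√c₁ · r̃_A) + (n−k) log(√c₂ · r̃_⊥) attains its minimum uniquely at c₁ = max( E/(E−1), min(n/k, E) ) and c₂ = max( E/(E−1), min(n/(n−k), E) ). -/
open MeasureTheory ProbabilityTheory Filter Matrix
open scoped ENNReal NNReal BigOperators Classical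

noncomputable section

private lemma hasDerivAt_Faux (N M x : ℝ) (hx : 1 < x) :
    HasDerivAt (fun y => N * Real.log y - M * Real.log (y - 1)) (N / x - M / (x - 1)) x := by
  have h1 : HasDerivAt Real.log x⁻¹ x := Real.hasDerivAt_log (by linarith)
  have h2 : HasDerivAt (fun y : ℝ => y - 1) 1 x := (hasDerivAt_id x).sub_const 1
  have h3 : HasDerivAt (fun y : ℝ => Real.log (y - 1)) ((x - 1)⁻¹ * 1) x :=
    (Real.hasDerivAt_log (by intro h; rw [sub_eq_zero] at h; linarith)).comp x h2
  have h := (h1.const_mul N).sub (h3.const_mul M)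
  exact h.congr_deriv (by simp [div_eq_mul_inv])

private lemma Faux_strictMonoOn (N M t : ℝ) (hM : 0 < M) (hMN : M < N) (ht : t = N / (N - M)) :
    StrictMonoOn (fun y => N * Real.log y - M * Real.log (y - 1)) (Set.Ici t) := by
  have hK : 0 < N - M := by linarith
  have ht1 : 1 < t := by rw [ht, lt_div_iff₀ hK]; linarith
  apply strictMonoOn_of_deriv_pos (convex_Ici t)
  · intro x hx
    exact (hasDerivAt_Faux N M x (lt_of_lt_of_le ht1 hx)).continuousAt.continuousWithinAt
  · intro x hx
    rw [interior_Ici] at hx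
    have hx1 : 1 < x := lt_trans ht1 hx
    rw [(hasDerivAt_Faux N M x hx1).deriv, sub_pos,
      div_lt_div_iff₀ (by linarith) (by linarith)]
    have htx : t < x := hx
    rw [ht, div_lt_iff₀ hK] at htx
    nlinarith

private lemma Faux_strictAntiOn (N M t : ℝ) (hM : 0 < M) (hMN : M < N) (ht : t = N / (N - M)) :
    StrictAntiOn (fun y => N * Real.log y - M * Real.log (y - 1)) (Set.Ioc 1 t) := by
  have hK : 0 < N - M := by linarith
  apply strictAntiOn_of_deriv_neg (convex_Ioc 1 t)
  · intro x hx
    exact (hasDerivAt_Faux N M x hx.1).continuousAt.continuousWithinAt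
  · intro x hx
    rw [interior_Ioc] at hx
    rw [(hasDerivAt_Faux N M x hx.1).deriv, sub_neg,
      div_lt_div_iff₀ (by linarith [hx.1]) (by linarith [hx.1])]
    have htx : x < t := hx.2
    rw [ht, lt_div_iff₀ hK] at htx
    nlinarith [hx.1]

set_option maxHeartbeats 1000000 in
/-- The constrained log-volume minimization (display (20)-(21) of the
paper): for `n > k ≥ 1`, `E > 2` and `r̃_A, r̃_⊥ > 0`, over the feasible set
`{(c₁,c₂) : 1/c₁ + 1/c₂ = 1, 1 < c₁ ≤ E, 1 < c₂ ≤ E}`, the function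
`(c₁,c₂) ↦ k log(√c₁ r̃_A) + (n-k) log(√c₂ r̃_⊥)` attains its minimum uniquely at
`c₁ = max(E/(E-1), min(n/k, E))` and `c₂ = max(E/(E-1), min(n/(n-k), E))`. -/
theorem logVolume_minimizer
    (n k : ℕ) (hk : 1 ≤ k) (hkn : k < n) (E rA rP : ℝ)
    (hE : 2 < E) (hrA : 0 < rA) (hrP : 0 < rP) :
    let g : ℝ → ℝ → ℝ := fun c1 c2 =>
      (k : ℝ) * Real.log (Real.sqrt c1 * rA)
        + ((n - k : ℕ) : ℝ) * Real.log (Real.sqrt c2 * rP)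
    let c1s : ℝ := max (E / (E - 1)) (min ((n : ℝ) / k) E)
    let c2s : ℝ := max (E / (E - 1)) (min ((n : ℝ) / ((n - k : ℕ) : ℝ)) E)
    -- the claimed minimizer is feasible
    (1 / c1s + 1 / c2s = 1 ∧ 1 < c1s ∧ c1s ≤ E ∧ 1 < c2s ∧ c2s ≤ E)
    -- it minimizes the log-volume over the feasible set
    ∧ (∀ c1 c2 : ℝ, 1 / c1 + 1 / c2 = 1 → 1 < c1 → c1 ≤ E → 1 < c2 → c2 ≤ E →
        g c1s c2s ≤ g c1 c2)
    -- and the minimizer is unique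
    ∧ (∀ c1 c2 : ℝ, 1 / c1 + 1 / c2 = 1 → 1 < c1 → c1 ≤ E → 1 < c2 → c2 ≤ E →
        (c1, c2) ≠ (c1s, c2s) → g c1s c2s < g c1 c2) := by
  intro g c1s c2s
  have hgdef : ∀ c1 c2 : ℝ, g c1 c2 = (k : ℝ) * Real.log (Real.sqrt c1 * rA)
      + ((n - k : ℕ) : ℝ) * Real.log (Real.sqrt c2 * rP) := fun _ _ => rfl
  have hc1s : c1s = max (E / (E - 1)) (min ((n : ℝ) / k) E) := rfl
  have hc2s : c2s = max (E / (E - 1)) (min ((n : ℝ) / ((n - k : ℕ) : ℝ)) E) := rfl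
  have hk1 : (1 : ℝ) ≤ (k : ℝ) := by exact_mod_cast hk
  have hkn' : (k : ℝ) < (n : ℝ) := by exact_mod_cast hkn
  have hMcast : ((n - k : ℕ) : ℝ) = (n : ℝ) - (k : ℝ) := by
    rw [Nat.cast_sub hkn.le]
  set M : ℝ := ((n - k : ℕ) : ℝ) with hMdef
  have hM0 : 0 < M := by rw [hMcast]; linarith
  have hMn : M < (n : ℝ) := by rw [hMcast]; linarith
  have hK0 : (0 : ℝ) < (k : ℝ) := by linarith
  have hNKM : (n : ℝ) = (k : ℝ) + M := by rw [hMcast]; ring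
  set F : ℝ → ℝ := fun y => (n : ℝ) * Real.log y - M * Real.log (y - 1) with hFdef
  set t : ℝ := (n : ℝ) / (k : ℝ) with htdef
  set s : ℝ := (n : ℝ) / M with hsdef
  set a : ℝ := E / (E - 1) with hadef
  have hE1 : (1 : ℝ) < E - 1 := by linarith
  have ha1 : 1 < a := by rw [hadef, lt_div_iff₀ (by linarith)]; linarith
  have haE : a < E := by rw [hadef, div_lt_iff₀ (by linarith)]; nlinarith
  have ht1 : 1 < t := by rw [htdef, lt_div_iff₀ hK0]; linarith
  have hs1 : 1 < s := by rw [hsdef, lt_div_iff₀ hM0]; linarith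
  have hmono := Faux_strictMonoOn (n : ℝ) M t hM0 hMn
    (by rw [htdef, hNKM]; ring_nf)
  have hanti := Faux_strictAntiOn (n : ℝ) M t hM0 hMn
    (by rw [htdef, hNKM]; ring_nf)
  rw [← hFdef] at hmono hanti
  -- relations between t, s, a, E
  have hts1 : t ≤ a ↔ E ≤ s := by
    rw [htdef, hadef, hsdef, div_le_div_iff₀ hK0 (by linarith), le_div_iff₀ hM0]
    constructor <;> intro h <;> nlinarith
  have hts2 : E ≤ t ↔ s ≤ a := by
    rw [htdef, hadef, hsdef, le_div_iff₀ hK0, div_le_div_iff₀ hM0 (by linarith)]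
    constructor <;> intro h <;> nlinarith
  -- the key unimodality statement
  have hmin : ∀ x : ℝ, a ≤ x → x ≤ E → x ≠ c1s → F c1s < F x := by
    intro x hax hxE hne
    have hx1 : 1 < x := lt_of_lt_of_le ha1 hax
    rcases le_or_gt t a with h1 | h1
    · have hc : c1s = a := by
        rw [hc1s, min_eq_left (le_trans h1 haE.le), max_eq_left h1]
      rw [hc] at hne ⊢
      exact hmono (le_trans h1 (le_refl a)) (le_trans h1 hax) (lt_of_le_of_ne hax (Ne.symm hne))
    · rcases le_or_gt E t with h2 | h2
      · have hc : c1s = E := by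
          rw [hc1s, min_eq_right h2, max_eq_right haE.le]
        rw [hc] at hne ⊢
        exact hanti ⟨hx1, le_trans hxE h2⟩ ⟨by linarith, h2⟩ (lt_of_le_of_ne hxE hne)
      · have hc : c1s = t := by
          rw [hc1s, min_eq_left h2.le, max_eq_right h1.le]
        rw [hc] at hne ⊢
        rcases lt_trichotomy x t with h3 | h3 | h3
        · exact hanti ⟨hx1, h3.le⟩ ⟨by linarith, le_refl t⟩ h3
        · exact absurd h3 hne
        · exact hmono (le_refl t) h3.le h3
  -- feasibility of the claimed minimizer
  have hfeas : 1 / c1s + 1 / c2s = 1 ∧ 1 < c1s ∧ c1s ≤ E ∧ 1 < c2s ∧ c2s ≤ E := by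
    rcases le_or_gt t a with h1 | h1
    · have hs : E ≤ s := hts1.mp h1
      have hc : c1s = a := by
        rw [hc1s, min_eq_left (le_trans h1 haE.le), max_eq_left h1]
      have hc2 : c2s = E := by
        rw [hc2s, min_eq_right hs, max_eq_right haE.le]
      refine ⟨?_, ?_, ?_, ?_, ?_⟩
      · rw [hc, hc2, hadef]; field_simp; ring
      · rw [hc]; exact ha1
      · rw [hc]; exact haE.le
      · rw [hc2]; linarith
      · rw [hc2]
    · rcases le_or_gt E t with h2 | h2
      · have hs : s ≤ a := hts2.mp h2
        have hc : c1s = E := by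
          rw [hc1s, min_eq_right h2, max_eq_right haE.le]
        have hc2 : c2s = a := by
          rw [hc2s, min_eq_left (le_trans hs haE.le), max_eq_left hs]
        refine ⟨?_, ?_, ?_, ?_, ?_⟩
        · rw [hc, hc2, hadef]; field_simp; ring
        · rw [hc]; linarith
        · rw [hc]
        · rw [hc2]; exact ha1
        · rw [hc2]; exact haE.le
      · have hsa : a < s := by
          by_contra h
          push_neg at h
          exact absurd (hts2.mpr h) (not_le.mpr h2)
        have hsE : s ≤ E := by
          by_contra h
          push_neg at h
          exact absurd (hts1.mpr h.le) (not_le.mpr h1)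
        have hc : c1s = t := by
          rw [hc1s, min_eq_left h2.le, max_eq_right h1.le]
        have hc2 : c2s = s := by
          rw [hc2s, min_eq_left hsE, max_eq_right hsa.le]
        refine ⟨?_, ?_, ?_, ?_, ?_⟩
        · rw [hc, hc2, htdef, hsdef]
          rw [one_div_div, one_div_div, ← add_div, ← hNKM]
          exact div_self (ne_of_gt (by linarith : (0:ℝ) < (n:ℝ)))
        · rw [hc]; exact ht1
        · rw [hc]; exact h2.le
        · rw [hc2]; exact hs1
        · rw [hc2]; exact hsE
  -- reduction of g to F on the feasible set
  have hgF : ∀ c1 c2 : ℝ, 1 / c1 + 1 / c2 = 1 → 1 < c1 → 1 < c2 →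
      g c1 c2 = F c1 / 2 + ((k : ℝ) * Real.log rA + M * Real.log rP) := by
    intro c1 c2 hcon h1 h2
    have hc10 : (0 : ℝ) < c1 := by linarith
    have hc20 : (0 : ℝ) < c2 := by linarith
    have hc1ne : c1 ≠ 0 := ne_of_gt hc10
    have hc2ne : c2 ≠ 0 := ne_of_gt hc20
    have hc11 : c1 - 1 ≠ 0 := by intro h; rw [sub_eq_zero] at h; linarith
    have hc2eq : c2 = c1 / (c1 - 1) := by
      field_simp at hcon ⊢
      nlinarith [hcon]
    have hsq1 : Real.log (Real.sqrt c1 * rA) = Real.log c1 / 2 + Real.log rA := by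
      rw [Real.log_mul (by positivity) (ne_of_gt hrA), Real.log_sqrt hc10.le]
    have hsq2 : Real.log (Real.sqrt c2 * rP) = Real.log c2 / 2 + Real.log rP := by
      rw [Real.log_mul (by positivity) (ne_of_gt hrP), Real.log_sqrt hc20.le]
    have hlog2 : Real.log c2 = Real.log c1 - Real.log (c1 - 1) := by
      rw [hc2eq, Real.log_div hc1ne hc11]
    rw [hgdef, hsq1, hsq2, hlog2, hFdef]
    simp only []
    rw [hNKM]
    ring
  -- lower bound for feasible c1
  have hfeas_lb : ∀ c1 c2 : ℝ, 1 / c1 + 1 / c2 = 1 → 1 < c1 → 1 < c2 → c2 ≤ E → a ≤ c1 := by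
    intro c1 c2 hcon h1 h2 hcE
    have hc10 : (0 : ℝ) < c1 := by linarith
    have hc20 : (0 : ℝ) < c2 := by linarith
    have hc1ne : c1 ≠ 0 := ne_of_gt hc10
    have hc2ne : c2 ≠ 0 := ne_of_gt hc20
    have hc2eq : c1 + c2 = c1 * c2 := by
      field_simp at hcon
      linarith [hcon]
    rw [hadef, div_le_iff₀ (by linarith : (0:ℝ) < E - 1)]
    nlinarith [hc2eq, mul_le_mul_of_nonneg_left hcE (le_of_lt hc10)]
  refine ⟨hfeas, ?_, ?_⟩
  · intro c1 c2 hcon hc11 hc1E hc21 hc2E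
    rw [hgF c1 c2 hcon hc11 hc21, hgF c1s c2s hfeas.1 hfeas.2.1 hfeas.2.2.2.1]
    have hac1 := hfeas_lb c1 c2 hcon hc11 hc21 hc2E
    rcases eq_or_ne c1 c1s with h | h
    · rw [h]
    · have hlt : F c1s < F c1 := hmin c1 hac1 hc1E h
      clear_value F c1s
      linarith
  · intro c1 c2 hcon hc11 hc1E hc21 hc2E hne
    have hc1ne : c1 ≠ c1s := by
      intro h
      apply hne
      have h2 : 1 / c2 = 1 / c2s := by
        have hfs := hfeas.1
        rw [← h] at hfs
        linarith [hcon]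
      have h3 : c2 = c2s := by
        rw [one_div, one_div] at h2
        exact inv_injective h2
      rw [Prod.mk.injEq]
      exact ⟨h, h3⟩
    rw [hgF c1 c2 hcon hc11 hc21, hgF c1s c2s hfeas.1 hfeas.2.1 hfeas.2.2.2.1]
    have hac1 := hfeas_lb c1 c2 hcon hc11 hc21 hc2E
    have hlt : F c1s < F c1 := hmin c1 hac1 hc1E hc1ne
    clear_value F c1s
    linarith


end
end
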